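/- arXiv:2310.17958 — 12 statements merged into one kernel-verified Lean document; each statement's English description precedes it below -/
import Mathlib

section
/- Let R be a ring and let e(x) = e_0 + e_1 x + ... + e_m x^m be an idempotent in the polynomial ring R[x]. Then every coefficient e_i lies in the two-sided ideal R e_0 R generated by the constant term e_0. -/
open Polynomial

/-- Strong induction on `i`: in `eᵢ = ∑_{j+k=i} eⱼ eₖ` every term either ends in `e₀` (when `k = 0`)
or starts with a coefficient of lower index. -/
theorem Polynomial.coeff_mem_of_mul_self_eq_of_coeff_zero_mem {R : Type*} [Ring R]
    (I : TwoSidedIdeal R) {e : R[X]} (he : e * e = e) (h0 : e.coeff 0 ∈ I) (i : ℕ) :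
    e.coeff i ∈ I := by
  induction i using Nat.strong_induction_on with
  | _ i ih =>
    rw [← he, coeff_mul]
    refine I.finsetSum_mem _ _ fun ⟨j, k⟩ hjk => ?_
    rw [Finset.HasAntidiagonal.mem_antidiagonal] at hjk
    rcases Nat.eq_zero_or_pos k with rfl | hk
    · exact I.mul_mem_left _ _ h0
    · exact I.mul_mem_right _ _ (ih j (by omega))

/-- If `e(x) = e₀ + e₁x + ⋯ + eₘxᵐ` is an idempotent of the polynomial ring `R[x]`,
then every coefficient `eᵢ` lies in the two-sided ideal `R e₀ R` generated by `e₀`. -/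
theorem coeff_mem_span_constantCoeff_of_idempotent_polynomial
    {R : Type*} [Ring R] (e : Polynomial R) (he : e * e = e) :
    ∀ i : ℕ, e.coeff i ∈ TwoSidedIdeal.span {e.coeff 0} :=
  coeff_mem_of_mul_self_eq_of_coeff_zero_mem _ he (TwoSidedIdeal.subset_span rfl)
end

section
/- Let R be a ring and let e(x) = \sum_{i=0}^\infty e_i x^i be an idempotent of the formal power series ring R[[x]]. Then every coefficient e_i lies in the two-sided ideal R e_0 R generated by the constant coefficient e_0. -/
namespace PowerSeries

variable {R : Type*} [Ring R]

/-- In `fₙ = ∑_{p+q=n} f_p e_q` every term with `p < n` lies in `I` by induction, and the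
remaining term is `fₙ e₀`. -/
theorem coeff_mem_of_mul_eq_self {f e : R⟦X⟧} (hfe : f * e = f) {I : TwoSidedIdeal R}
    (he : coeff 0 e ∈ I) (n : ℕ) : coeff n f ∈ I := by
  induction n using Nat.strong_induction_on with
  | _ n ih =>
    rw [← hfe, coeff_mul]
    refine sum_mem fun ⟨p, q⟩ hpq => ?_
    rw [Finset.HasAntidiagonal.mem_antidiagonal] at hpq
    rcases lt_or_ge p n with hlt | hge
    · exact I.mul_mem_right _ _ (ih p hlt)
    · obtain rfl : q = 0 := by omega
      exact I.mul_mem_left _ _ he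

end PowerSeries

/-- If `e(x) = ∑ eᵢxⁱ` is an idempotent of the formal power series ring `R[[x]]`,
then every coefficient `eᵢ` lies in the two-sided ideal `R e₀ R` generated by the
constant coefficient `e₀`. -/
theorem coeff_mem_span_constantCoeff_of_idempotent_powerSeries
    {R : Type*} [Ring R] (e : PowerSeries R) (he : e * e = e) :
    ∀ i : ℕ, PowerSeries.coeff i e ∈ TwoSidedIdeal.span {PowerSeries.coeff 0 e} :=
  PowerSeries.coeff_mem_of_mul_eq_self he (TwoSidedIdeal.subset_span rfl)
end

section
/- Let R be a ring and e(x) = e_0 + e_1 x + ... + e_m x^m a left semicentral idempotent of the polynomial ring R[x], i.e. f e(x) = e(x) f e(x) for all f in R[x]. Then e_0 is a left semicentral idempotent of R, e_0 e_i = e_i for all 0 \le i \le m, e_i e_0 = 0 for all 1 \le i \le m, and e(x) R[x] = e_0 R[x]. -/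
/-- If `e(x) = e₀ + e₁x + ⋯ + eₘxᵐ` is a left semicentral idempotent of `R[x]`
(i.e. `f·e = e·f·e` for all `f`), then `e₀` is a left semicentral idempotent of `R`,
`e₀eᵢ = eᵢ` for all `i`, `eᵢe₀ = 0` for all `i ≥ 1`, and `e(x)R[x] = e₀R[x]`. -/
theorem left_semicentral_idempotent_polynomial
    {R : Type*} [Ring R] (e : Polynomial R) (he : e * e = e)
    (hsc : ∀ f : Polynomial R, f * e = e * f * e) :
    (e.coeff 0 * e.coeff 0 = e.coeff 0 ∧ ∀ r : R, r * e.coeff 0 = e.coeff 0 * r * e.coeff 0)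
    ∧ (∀ i : ℕ, e.coeff 0 * e.coeff i = e.coeff i)
    ∧ (∀ i : ℕ, 1 ≤ i → e.coeff i * e.coeff 0 = 0)
    ∧ (∀ g : Polynomial R, (∃ f, g = e * f) ↔ ∃ f, g = Polynomial.C (e.coeff 0) * f) := by
  have h00 : e.coeff 0 * e.coeff 0 = e.coeff 0 := by
    have := congrArg (fun p => Polynomial.coeff p 0) he
    simpa [Polynomial.mul_coeff_zero] using this
  have key : ∀ (r : R) (k : ℕ), r * e.coeff k =
      ∑ i ∈ Finset.range (k + 1), e.coeff i * (r * e.coeff (k - i)) := by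
    intro r k
    have h := hsc (Polynomial.C r)
    rw [mul_assoc] at h
    have h2 : (Polynomial.C r * e).coeff k = (e * (Polynomial.C r * e)).coeff k :=
      congrArg (fun p => p.coeff k) h
    rw [Polynomial.coeff_C_mul, Polynomial.coeff_mul] at h2
    simp only [Polynomial.coeff_C_mul] at h2
    rwa [Finset.Nat.sum_antidiagonal_eq_sum_range_succ_mk] at h2
  have hid : ∀ k : ℕ, e.coeff k =
      ∑ i ∈ Finset.range (k + 1), e.coeff i * e.coeff (k - i) := by
    intro k
    have := congrArg (fun p => Polynomial.coeff p k) he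
    simpa [Polynomial.coeff_mul,
      Finset.Nat.sum_antidiagonal_eq_sum_range_succ_mk] using this.symm
  have main : ∀ k : ℕ, e.coeff 0 * e.coeff k = e.coeff k ∧
      (1 ≤ k → e.coeff k * e.coeff 0 = 0) := by
    intro k
    induction k using Nat.strong_induction_on with
    | _ k ih =>
      match k with
      | 0 => exact ⟨h00, fun h => by omega⟩
      | (k+1) =>
        have hzero : e.coeff (k+1) * e.coeff 0 = 0 := by
          have h := key (e.coeff 0) (k+1)
          rw [Finset.sum_range_succ' _ (k+1), Finset.sum_range_succ] at h
          have hmid : ∑ i ∈ Finset.range k,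
              e.coeff (i+1) * (e.coeff 0 * e.coeff (k + 1 - (i+1))) = 0 := by
            apply Finset.sum_eq_zero
            intro i hi
            simp only [Finset.mem_range] at hi
            rw [← mul_assoc, (ih (i+1) (by omega)).2 (by omega), zero_mul]
          rw [hmid, zero_add] at h
          simp only [Nat.sub_self, Nat.sub_zero] at h
          rw [h00, ← mul_assoc, h00] at h
          exact (add_right_cancel (a := (0 : R)) (b := e.coeff 0 * e.coeff (k+1))
            (c := e.coeff (k+1) * e.coeff 0) (by rw [zero_add]; exact h)).symm
        have hone : e.coeff 0 * e.coeff (k+1) = e.coeff (k+1) := by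
          have h := hid (k+1)
          rw [Finset.sum_range_succ' _ (k+1), Finset.sum_range_succ] at h
          have hmid : ∑ i ∈ Finset.range k,
              e.coeff (i+1) * e.coeff (k + 1 - (i+1)) = 0 := by
            apply Finset.sum_eq_zero
            intro i hi
            simp only [Finset.mem_range] at hi
            rw [← (ih (k + 1 - (i+1)) (by omega)).1, ← mul_assoc,
              (ih (i+1) (by omega)).2 (by omega), zero_mul]
          rw [hmid, zero_add] at h
          simp only [Nat.sub_self, Nat.sub_zero] at h
          rw [hzero, zero_add] at h
          exact h.symm
        exact ⟨hone, fun _ => hzero⟩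
  have hCe : Polynomial.C (e.coeff 0) * e = e := by
    ext n
    simp [Polynomial.coeff_C_mul, (main n).1]
  have heC : e * Polynomial.C (e.coeff 0) = Polynomial.C (e.coeff 0) := by
    ext n
    rw [Polynomial.coeff_mul_C, Polynomial.coeff_C]
    rcases n with _ | n
    · simp [h00]
    · simp [(main (n+1)).2 (by omega)]
  refine ⟨⟨h00, ?_⟩, fun i => (main i).1, fun i hi => (main i).2 hi, fun g => ⟨?_, ?_⟩⟩
  · intro r
    have h := key r 0
    simpa [mul_assoc] using h
  · rintro ⟨f, rfl⟩
    exact ⟨e * f, by rw [← mul_assoc, hCe]⟩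
  · rintro ⟨f, rfl⟩
    exact ⟨Polynomial.C (e.coeff 0) * f, by rw [← mul_assoc, heC]⟩
end

section
/- Let R be a ring and e(x) = \sum_{i\ge 0} e_i x^i a left semicentral idempotent of the formal power series ring R[[x]]. Then e_0 is a left semicentral idempotent of R, e_0 e_i = e_i for all i \ge 0, e_i e_0 = 0 for all i \ge 1, and e(x) R[[x]] = e_0 R[[x]]. -/
/-!
Write `c = C e₀`. Both `e` and `c` are left semicentral idempotents of `R⟦X⟧` with the same
constant coefficient. For left semicentral idempotents `p, q` of any ring, `(1 - p) q` is again
idempotent; in `R⟦X⟧` an idempotent with zero constant coefficient vanishes, since its order `n`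
would satisfy `2n ≤ n`. Hence `c e = e` and `e c = c`, which give all four claims.
-/

def IsLeftSemicentral {S : Type*} [Mul S] (e : S) : Prop :=
  ∀ s : S, s * e = e * s * e

theorem IsLeftSemicentral.map {S T : Type*} [NonUnitalNonAssocSemiring S]
    [NonUnitalNonAssocSemiring T] {e : S} (he : IsLeftSemicentral e) (f : S →ₙ+* T)
    (hf : Function.Surjective f) : IsLeftSemicentral (f e) := by
  intro t
  obtain ⟨s, rfl⟩ := hf t
  rw [← map_mul, he s, map_mul, map_mul]

theorem isIdempotentElem_one_sub_mul {S : Type*} [Ring S] {p q : S} (hp : IsIdempotentElem p)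
    (hq : IsIdempotentElem q) (hq' : IsLeftSemicentral q) :
    IsIdempotentElem ((1 - p) * q) :=
  calc (1 - p) * q * ((1 - p) * q) = (1 - p) * (q * q - q * p * q) := by noncomm_ring
    _ = (1 - p) * (q - p * q) := by rw [hq.eq, ← hq' p]
    _ = (1 - p) * (1 - p) * q := by noncomm_ring
    _ = (1 - p) * q := by rw [hp.one_sub.eq]

namespace PowerSeries

variable {R : Type*}

theorem isLeftSemicentral_C [Semiring R] {r : R} (hr : IsLeftSemicentral r) :
    IsLeftSemicentral (C r) := by
  intro f
  ext n
  rw [coeff_mul_C, coeff_mul_C, coeff_C_mul, hr]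

theorem eq_zero_of_isIdempotentElem_of_constantCoeff_eq_zero [Semiring R] {u : R⟦X⟧}
    (hu : IsIdempotentElem u) (h0 : constantCoeff u = 0) : u = 0 := by
  have hpos : 1 ≤ u.order := one_le_order_iff_constCoeff_eq_zero.mpr h0
  have hle : u.order + u.order ≤ u.order := (le_order_mul u u).trans_eq (by rw [hu.eq])
  rw [← order_eq_top]
  generalize u.order = n at hpos hle
  induction n using ENat.recTopCoe with
  | top => rfl
  | coe n => norm_cast at hpos hle; omega

theorem mul_eq_right_of_constantCoeff_eq [Ring R] {p q : R⟦X⟧} (hp : IsIdempotentElem p)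
    (hq : IsIdempotentElem q) (hq' : IsLeftSemicentral q)
    (hpq : constantCoeff p = constantCoeff q) : p * q = q := by
  have hzero : (1 - p) * q = 0 := by
    refine eq_zero_of_isIdempotentElem_of_constantCoeff_eq_zero
      (isIdempotentElem_one_sub_mul hp hq hq') ?_
    rw [map_mul, map_sub, map_one, hpq, sub_mul, one_mul, (hq.map constantCoeff).eq, sub_self]
  rwa [sub_mul, one_mul, sub_eq_zero, eq_comm] at hzero

end PowerSeries

open PowerSeries in
/-- If `e(x) = ∑ eᵢxⁱ` is a left semicentral idempotent of `R[[x]]`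
(i.e. `f·e = e·f·e` for all `f`), then `e₀` is a left semicentral idempotent of `R`,
`e₀eᵢ = eᵢ` for all `i ≥ 0`, `eᵢe₀ = 0` for all `i ≥ 1`, and `e(x)R[[x]] = e₀R[[x]]`. -/
theorem left_semicentral_idempotent_powerSeries
    {R : Type*} [Ring R] (e : PowerSeries R) (he : e * e = e)
    (hsc : ∀ f : PowerSeries R, f * e = e * f * e) :
    (PowerSeries.coeff 0 e * PowerSeries.coeff 0 e = PowerSeries.coeff 0 e ∧
      ∀ r : R, r * PowerSeries.coeff 0 e
        = PowerSeries.coeff 0 e * r * PowerSeries.coeff 0 e)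
    ∧ (∀ i : ℕ, PowerSeries.coeff 0 e * PowerSeries.coeff i e = PowerSeries.coeff i e)
    ∧ (∀ i : ℕ, 1 ≤ i → PowerSeries.coeff i e * PowerSeries.coeff 0 e = 0)
    ∧ (∀ g : PowerSeries R, (∃ f, g = e * f) ↔
        ∃ f, g = PowerSeries.C (PowerSeries.coeff 0 e) * f) := by
  have he : IsIdempotentElem e := he
  have hsc : IsLeftSemicentral e := hsc
  have he₀ : IsIdempotentElem (constantCoeff e) := he.map constantCoeff
  have hsc₀ : IsLeftSemicentral (constantCoeff e) :=
    hsc.map (constantCoeff : R⟦X⟧ →+* R).toNonUnitalRingHom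
      fun r => ⟨C r, constantCoeff_C r⟩
  have hc : IsIdempotentElem (C (constantCoeff e)) := he₀.map C
  have hc_e : C (constantCoeff e) * e = e :=
    mul_eq_right_of_constantCoeff_eq hc he hsc (constantCoeff_C _)
  have he_c : e * C (constantCoeff e) = C (constantCoeff e) :=
    mul_eq_right_of_constantCoeff_eq he hc (isLeftSemicentral_C hsc₀) (constantCoeff_C _).symm
  simp only [coeff_zero_eq_constantCoeff_apply]
  refine ⟨⟨he₀.eq, hsc₀⟩, fun i => ?_, fun i hi => ?_, fun g => ⟨?_, ?_⟩⟩
  · rw [← coeff_C_mul, hc_e]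
  · rw [← coeff_mul_C, he_c, coeff_C, if_neg (by omega)]
  · rintro ⟨f, rfl⟩
    exact ⟨e * f, by rw [← mul_assoc, hc_e]⟩
  · rintro ⟨f, rfl⟩
    exact ⟨C (constantCoeff e) * f, by rw [← mul_assoc, he_c]⟩
end

section
/- A ring R is right cP-Baer if and only if for all finitely many idempotents e_1,...,e_m of R, the right annihilator r_R(e_1 R + ... + e_m R) equals f R for some idempotent f of R. -/
/-- A ring `R` is right 𝔠𝔓-Baer iff for all finitely many idempotents `e₁, …, eₘ` of `R`,
the right annihilator `r_R(e₁R + ⋯ + eₘR)` equals `fR` for some idempotent `f`. -/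
theorem cpBaer_iff_annihilator_finite_sums
    {R : Type*} [Ring R] :
    (∀ e : R, e * e = e → ∃ c : R, c * c = c ∧
        ∀ a : R, (∀ r : R, e * r * a = 0) ↔ ∃ r : R, a = c * r)
    ↔ (∀ (m : ℕ) (e : Fin m → R), (∀ i, e i * e i = e i) →
        ∃ f : R, f * f = f ∧
          ∀ a : R, (∀ i, ∀ r : R, e i * r * a = 0) ↔ ∃ r : R, a = f * r) := by
  constructor
  · intro h m
    induction m with
    | zero =>
      intro e _
      exact ⟨1, one_mul 1, fun a =>
        ⟨fun _ => ⟨a, (one_mul a).symm⟩, fun _ i => i.elim0⟩⟩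
    | succ n ih =>
      intro e he
      obtain ⟨f, hf, hfP⟩ := ih (fun i => e i.castSucc) (fun i => he _)
      obtain ⟨c, hc, hcP⟩ := h (e (Fin.last n)) (he _)
      -- c is annihilated: e_last * r * c = 0 for all r
      have hcann : ∀ r : R, e (Fin.last n) * r * c = 0 := (hcP c).mpr ⟨c, hc.symm⟩
      -- c is left semicentral: s * c = c * (s * c)
      have semic : ∀ s : R, s * c = c * (s * c) := by
        intro s
        obtain ⟨t, ht⟩ := (hcP (s * c)).mp (fun r => by
          have h1 := hcann (r * s)
          rw [mul_assoc] at h1 ⊢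
          rw [← mul_assoc r s c]
          exact h1)
        have : c * (s * c) = c * (c * t) := by rw [ht]
        rw [this, ← mul_assoc, hc, ← ht]
      refine ⟨f * c, ?_, ?_⟩
      · have h1 : f * c = c * (f * c) := semic f
        calc f * c * (f * c) = f * (c * (f * c)) := by rw [mul_assoc]
          _ = f * (f * c) := by rw [← h1]
          _ = f * c := by rw [← mul_assoc, hf]
      · intro a
        constructor
        · intro ha
          obtain ⟨r1, hr1⟩ := (hfP a).mp (fun i r => ha i.castSucc r)
          obtain ⟨r2, hr2⟩ := (hcP a).mp (ha (Fin.last n))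
          have hfa : f * a = a := by rw [hr1, ← mul_assoc, hf]
          have hca : c * a = a := by rw [hr2, ← mul_assoc, hc]
          exact ⟨a, by rw [mul_assoc, hca, hfa]⟩
        · rintro ⟨r, rfl⟩ i
          refine Fin.lastCases ?_ ?_ i
          · intro r'
            have h1 : f * c * r = c * (f * c * r) := by
              conv_lhs => rw [semic f]
              rw [mul_assoc]
            rw [h1, ← mul_assoc (e (Fin.last n) * r') c (f * c * r),
              hcann r', zero_mul]
          · intro j r'
            have h2 : ∀ i : Fin n, ∀ s : R,
                e i.castSucc * s * (f * (c * r)) = 0 :=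
              (hfP (f * (c * r))).mpr ⟨c * r, rfl⟩
            rw [mul_assoc f c r]
            exact h2 j r'
  · intro h e he
    obtain ⟨f, hf, hP⟩ := h 1 (fun _ => e) (fun _ => he)
    exact ⟨f, hf, fun a =>
      ⟨fun ha => (hP a).mp (fun _ => ha), fun ha r => (hP a).mpr ha 0 r⟩⟩
end

section
/- A ring R is right cP-Baer if and only if the polynomial ring R[x] is right cP-Baer. -/
/-!
For an idempotent polynomial `f`, the right annihilator `r(f R[x])` consists exactly of the
polynomials whose coefficients all lie in `r(f₀ R)`, where `f₀` is the constant term of `f`.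
The key point is that `r(f₀ R) ⊆ r(fₙ R)` for every coefficient `fₙ`, which follows by
induction on `n` from `fₙ = ∑_{i+j=n} fᵢ fⱼ`. Hence a generator `c` of `r(f₀ R)` yields the
generator `C c` of `r(f R[x])`; conversely, for `e ∈ R`, the constant term of a generator of
`r(C e · R[x])` generates `r(e R)`.
-/

/-- A ring `S` is right 𝔠𝔓-Baer if for every idempotent `e` of `S` there exists an
idempotent `c` with `r_S(eS) = cS`. -/
def IsRightCPBaer (S : Type*) [Ring S] : Prop :=
  ∀ e : S, e * e = e → ∃ c : S, c * c = c ∧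
    ∀ a : S, (∀ r : S, e * r * a = 0) ↔ ∃ r : S, a = c * r

open Polynomial Finset

namespace Polynomial

variable {R : Type*} [Ring R]

theorem coeff_mul_mul_eq_zero_of_coeff_zero {f : R[X]} (hf : IsIdempotentElem f) {a : R}
    (ha : ∀ r, f.coeff 0 * r * a = 0) (n : ℕ) (r : R) : f.coeff n * r * a = 0 := by
  induction n using Nat.strong_induction_on generalizing r with
  | _ n ih =>
    have hsum : ∑ x ∈ antidiagonal n, f.coeff x.1 * f.coeff x.2 * r * a = f.coeff n * r * a := by
      rw [← sum_mul, ← sum_mul, ← coeff_mul, hf.eq]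
    rw [← hsum]
    refine sum_eq_zero fun ⟨i, j⟩ hij => ?_
    rw [HasAntidiagonal.mem_antidiagonal] at hij
    rcases i.eq_zero_or_pos with rfl | hi
    · rw [mul_assoc _ (f.coeff j)]
      exact ha _
    · rw [mul_assoc, mul_assoc, ← mul_assoc (f.coeff j), ih j (by omega), mul_zero]

theorem forall_mul_mul_eq_zero_iff {f : R[X]} (hf : IsIdempotentElem f) (g : R[X]) :
    (∀ p, f * p * g = 0) ↔ ∀ n r, f.coeff 0 * r * g.coeff n = 0 := by
  constructor
  · intro H n
    induction n using Nat.strong_induction_on with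
    | _ n ih =>
      intro r
      have hcoeff := congr_arg (coeff · n) (H (C r))
      rw [coeff_mul, coeff_zero] at hcoeff
      simp only [coeff_mul_C] at hcoeff
      rwa [sum_eq_single_of_mem (0, n) (by simp)] at hcoeff
      rintro ⟨i, j⟩ hij hne
      rw [HasAntidiagonal.mem_antidiagonal] at hij
      have hj : j < n := by
        rcases i.eq_zero_or_pos with rfl | hi
        · simp_all
        · omega
      exact coeff_mul_mul_eq_zero_of_coeff_zero hf (ih j hj) i r
  · intro hg p
    ext n
    rw [coeff_mul, coeff_zero]
    refine sum_eq_zero fun ⟨i, j⟩ _ => ?_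
    rw [coeff_mul, sum_mul]
    exact sum_eq_zero fun ⟨k, l⟩ _ => coeff_mul_mul_eq_zero_of_coeff_zero hf (hg j) k _

theorem exists_eq_C_mul_iff {c : R} (hc : IsIdempotentElem c) (g : R[X]) :
    (∃ q, g = C c * q) ↔ ∀ n, ∃ r, g.coeff n = c * r := by
  constructor
  · rintro ⟨q, rfl⟩ n
    exact ⟨q.coeff n, coeff_C_mul q⟩
  · intro hg
    refine ⟨g, ext fun n => ?_⟩
    obtain ⟨r, hr⟩ := hg n
    rw [coeff_C_mul, hr, ← mul_assoc, hc.eq]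

end Polynomial

theorem IsRightCPBaer.polynomial {R : Type*} [Ring R] (hR : IsRightCPBaer R) :
    IsRightCPBaer R[X] := by
  intro f (hf : IsIdempotentElem f)
  have hf₀ : IsIdempotentElem (f.coeff 0) := by simpa using hf.map constantCoeff
  obtain ⟨c, (hc : IsIdempotentElem c), hcR⟩ := hR (f.coeff 0) hf₀
  refine ⟨C c, hc.map C, fun g => ?_⟩
  rw [forall_mul_mul_eq_zero_iff hf, exists_eq_C_mul_iff hc]
  exact forall_congr' fun n => hcR (g.coeff n)

theorem IsRightCPBaer.of_polynomial {R : Type*} [Ring R] (hRX : IsRightCPBaer R[X]) :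
    IsRightCPBaer R := by
  intro e (he : IsIdempotentElem e)
  have hCe : IsIdempotentElem (C e) := he.map C
  obtain ⟨c, (hc : IsIdempotentElem c), hcRX⟩ := hRX (C e) hCe
  have hann (g : R[X]) : (∀ n r, e * r * g.coeff n = 0) ↔ ∃ q, g = c * q := by
    rw [← hcRX, forall_mul_mul_eq_zero_iff hCe, coeff_C_zero]
  have hc₀ : IsIdempotentElem (c.coeff 0) := by simpa using hc.map constantCoeff
  refine ⟨c.coeff 0, hc₀, fun a => ⟨?_, ?_⟩⟩
  · intro ha
    obtain ⟨q, hq⟩ := (hann (C a)).mp fun n r => by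
      rw [coeff_C]
      split_ifs
      exacts [ha r, mul_zero _]
    have hfix : c * C a = C a := by rw [hq, ← mul_assoc, hc]
    exact ⟨a, by simpa using (congr_arg (coeff · 0) hfix).symm⟩
  · rintro ⟨r, rfl⟩ s
    rw [← mul_assoc, (hann c).mpr ⟨c, hc.symm⟩ 0 s, zero_mul]

/-- A ring `R` is right 𝔠𝔓-Baer iff the polynomial ring `R[x]` is right 𝔠𝔓-Baer. -/
theorem isRightCPBaer_iff_polynomial {R : Type*} [Ring R] :
    IsRightCPBaer R ↔ IsRightCPBaer (Polynomial R) :=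
  ⟨IsRightCPBaer.polynomial, IsRightCPBaer.of_polynomial⟩
end

section
/- A ring R is right cP-Baer if and only if the formal power series ring R[[x]] is right cP-Baer. -/
open PowerSeries

section Ring

variable {S : Type*} [Ring S]

theorem IsIdempotentElem.mul_intertwine {e E : S} (he : IsIdempotentElem e)
    (hE : IsIdempotentElem E) :
    e * (e * E + (1 - e) * (1 - E)) = (e * E + (1 - e) * (1 - E)) * E := by
  have he' : e * (1 - e) = 0 := by rw [mul_sub, mul_one, he.eq, sub_self]
  have hE' : (1 - E) * E = 0 := by rw [sub_mul, one_mul, hE.eq, sub_self]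
  rw [mul_add, ← mul_assoc, he.eq, ← mul_assoc, he', zero_mul, add_zero,
    add_mul, mul_assoc e, hE.eq, mul_assoc, hE', mul_zero, add_zero]

theorem forall_mul_mul_eq_zero_iff_of_mul_eq_mul {e E v : S} (hv : IsUnit v)
    (h : e * v = v * E) (a : S) :
    (∀ r, E * r * a = 0) ↔ ∀ r, e * r * a = 0 := by
  obtain ⟨u, rfl⟩ := hv
  have hE : E = ↑u⁻¹ * e * u := by rw [mul_assoc, h, ← mul_assoc, u.inv_mul, one_mul]
  constructor
  · intro hA r
    have : e * r = u * (E * (↑u⁻¹ * r)) := by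
      rw [← mul_assoc (u : S), ← h, mul_assoc, u.mul_inv_cancel_left]
    rw [this, mul_assoc, hA, mul_zero]
  · intro hA r
    rw [hE, mul_assoc _ _ r, mul_assoc, mul_assoc, ← mul_assoc e, hA, mul_zero]

end Ring

namespace PowerSeries

variable {R : Type*} [Ring R]

theorem isUnit_intertwiner {E : R⟦X⟧} (hE : IsIdempotentElem E) :
    IsUnit (C (constantCoeff E) * E + (1 - C (constantCoeff E)) * (1 - E)) := by
  have hE₀ : IsIdempotentElem (constantCoeff E) := hE.map constantCoeff
  rw [isUnit_iff_constantCoeff]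
  simp only [map_add, map_mul, map_sub, map_one, constantCoeff_C, hE₀.eq, hE₀.one_sub.eq,
    add_sub_cancel, isUnit_one]

theorem forall_mul_mul_eq_zero_iff_C_constantCoeff {E : R⟦X⟧} (hE : IsIdempotentElem E)
    (A : R⟦X⟧) :
    (∀ F, E * F * A = 0) ↔ ∀ F, C (constantCoeff E) * F * A = 0 :=
  forall_mul_mul_eq_zero_iff_of_mul_eq_mul (isUnit_intertwiner hE)
    ((hE.map constantCoeff).map C |>.mul_intertwine hE) A

theorem forall_C_mul_mul_eq_zero_iff (e : R) (A : R⟦X⟧) :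
    (∀ F, C e * F * A = 0) ↔ ∀ n r, e * r * coeff n A = 0 := by
  constructor
  · intro hA n r
    simpa only [mul_assoc, coeff_C_mul, map_zero] using congrArg (coeff n) (hA (C r))
  · intro hA F
    ext n
    rw [mul_assoc, coeff_C_mul, coeff_mul, Finset.mul_sum, map_zero]
    exact Finset.sum_eq_zero fun ij _ => by rw [← mul_assoc, hA]

theorem exists_eq_C_mul_iff {c : R} (hc : IsIdempotentElem c) (A : R⟦X⟧) :
    (∃ G, A = C c * G) ↔ ∀ n, ∃ r, coeff n A = c * r := by
  constructor
  · rintro ⟨G, rfl⟩ n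
    exact ⟨coeff n G, coeff_C_mul n G c⟩
  · intro hA
    refine ⟨A, ext fun n => ?_⟩
    obtain ⟨r, hr⟩ := hA n
    rw [coeff_C_mul, hr, ← mul_assoc, hc.eq]

end PowerSeries

/-- A ring `R` is right 𝔠𝔓-Baer iff the formal power series ring `R[[x]]` is right 𝔠𝔓-Baer. -/
theorem isRightCPBaer_iff_powerSeries {R : Type*} [Ring R] :
    IsRightCPBaer R ↔ IsRightCPBaer (PowerSeries R) := by
  constructor
  · intro hR E hE
    obtain ⟨c, hc, hcR⟩ := hR (constantCoeff E) (by rw [← map_mul, hE])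
    refine ⟨C c, by rw [← map_mul, hc], fun A => ?_⟩
    rw [forall_mul_mul_eq_zero_iff_C_constantCoeff hE, forall_C_mul_mul_eq_zero_iff,
      exists_eq_C_mul_iff hc]
    exact forall_congr' fun n => hcR (coeff n A)
  · intro hS e he
    obtain ⟨c', hc', hc'S⟩ := hS (C e) (by rw [← map_mul, he])
    have hc'ann := (forall_C_mul_mul_eq_zero_iff e c').1 ((hc'S c').2 ⟨1, (mul_one c').symm⟩)
    refine ⟨constantCoeff c', by rw [← map_mul, hc'], fun a => ⟨fun ha => ?_, ?_⟩⟩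
    · have hCa : ∀ F, C e * F * C a = 0 := by
        refine (forall_C_mul_mul_eq_zero_iff e (C a)).2 fun n r => ?_
        rw [coeff_C]
        split_ifs
        exacts [ha r, mul_zero _]
      obtain ⟨G, hG⟩ := (hc'S (C a)).1 hCa
      exact ⟨constantCoeff G, by simpa using congrArg constantCoeff hG⟩
    · rintro ⟨r, rfl⟩ s
      rw [← mul_assoc, ← coeff_zero_eq_constantCoeff_apply, hc'ann, zero_mul]
end

section
/- Let R be a ring and X a nonempty set of commuting indeterminates. Then R is right cP-Baer if and only if the polynomial ring R[X] in the indeterminates X is right cP-Baer. -/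
section Idempotent

variable {S : Type*} [Ring S] {E F : S}

theorem IsIdempotentElem.mul_add_one_sub_mul_one_sub_self (hE : IsIdempotentElem E) :
    E * E + (1 - E) * (1 - E) = 1 := by
  rw [hE.eq, hE.one_sub.eq, add_sub_cancel]

theorem IsIdempotentElem.mul_mul_eq_zero_of_isLeftRegular (hE : IsIdempotentElem E)
    (hF : IsIdempotentElem F) (hw : IsLeftRegular (F * E + (1 - F) * (1 - E))) {p : S}
    (hp : ∀ q, F * q * p = 0) (q : S) : E * q * p = 0 := by
  have hwE : (F * E + (1 - F) * (1 - E)) * E = F * (F * E + (1 - F) * (1 - E)) := by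
    rw [add_mul, mul_assoc, hE.eq, mul_assoc, hE.one_sub_mul_self, mul_zero, add_zero, mul_add,
      ← mul_assoc, hF.eq, ← mul_assoc, hF.mul_one_sub_self, zero_mul, add_zero]
  rw [← hw.mul_left_eq_zero_iff, ← mul_assoc, ← mul_assoc, hwE, mul_assoc F, hp]

end Idempotent

namespace AddMonoidAlgebra

variable {R : Type*} [Ring R]

section AddMonoid

variable {G : Type*} [AddMonoid G]

theorem single_zero_mul_eq_zero_iff {b : R} {p : AddMonoidAlgebra R G} :
    single 0 b * p = 0 ↔ ∀ g, b * p.coeff g = 0 := by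
  simp only [← coeff_inj, Finsupp.ext_iff, coeff_single_zero_mul, coeff_zero, Finsupp.coe_zero,
    Pi.zero_apply]

theorem single_zero_mul_mul_eq_zero_iff {b : R} {p : AddMonoidAlgebra R G} :
    (∀ q, single 0 b * q * p = 0) ↔ ∀ r g, b * r * p.coeff g = 0 := by
  refine ⟨fun h r => ?_, fun h q => ?_⟩
  · rw [← single_zero_mul_eq_zero_iff, ← h (single 0 r), single_mul_single, add_zero]
  induction q using induction_linear with
  | zero => rw [mul_zero, zero_mul]
  | add q₁ q₂ h₁ h₂ => rw [mul_add, add_mul, h₁, h₂, add_zero]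
  | single g r =>
    have hcomm : single 0 b * single g r = single g 1 * single 0 (b * r) := by
      simp only [single_mul_single, zero_add, add_zero, one_mul]
    rw [hcomm, mul_assoc, single_zero_mul_eq_zero_iff.mpr (h r), mul_zero]

theorem exists_eq_single_zero_mul_iff {c : R} (hc : IsIdempotentElem c)
    {p : AddMonoidAlgebra R G} :
    (∃ q, p = single 0 c * q) ↔ ∀ g, ∃ r, p.coeff g = c * r := by
  refine ⟨?_, fun h => ⟨p, ?_⟩⟩
  · rintro ⟨q, rfl⟩ g
    exact ⟨q.coeff g, coeff_single_zero_mul q c g⟩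
  · refine coeff_injective (Finsupp.ext fun g => ?_)
    obtain ⟨r, hr⟩ := h g
    rw [coeff_single_zero_mul, hr, ← mul_assoc, hc.eq]

end AddMonoid

variable {σ : Type*}

/-- Mathlib's coercion of `MvPolynomial` into `MvPowerSeries` requires a commutative base ring. -/
noncomputable def toMvPowerSeries :
    AddMonoidAlgebra R (σ →₀ ℕ) →+* MvPowerSeries σ R where
  toFun f := show MvPowerSeries σ R from ⇑f.coeff
  map_one' := by
    classical
    refine MvPowerSeries.ext fun n => ?_
    rw [MvPowerSeries.coeff_one]
    exact Finsupp.single_apply.trans (if_congr eq_comm rfl rfl)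
  map_mul' f g := by
    classical
    refine MvPowerSeries.ext fun n => ?_
    rw [MvPowerSeries.coeff_mul]
    exact coeff_mul_antidiag f g n _ Finset.HasAntidiagonal.mem_antidiagonal
  map_zero' := rfl
  map_add' _ _ := rfl

theorem toMvPowerSeries_injective : Function.Injective (toMvPowerSeries (R := R) (σ := σ)) :=
  fun _ _ h => coeff_injective (DFunLike.coe_injective h)

noncomputable def constantCoeff : AddMonoidAlgebra R (σ →₀ ℕ) →+* R :=
  MvPowerSeries.constantCoeff.comp toMvPowerSeries

@[simp]
theorem constantCoeff_single_zero (r : R) : constantCoeff (single (0 : σ →₀ ℕ) r) = r :=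
  Finsupp.single_eq_same

theorem isLeftRegular_of_isUnit_constantCoeff {w : AddMonoidAlgebra R (σ →₀ ℕ)}
    (hw : IsUnit (constantCoeff w)) : IsLeftRegular w := by
  have hunit : IsUnit (toMvPowerSeries w) := MvPowerSeries.isUnit_iff_constantCoeff.mpr hw
  intro f g (hfg : w * f = w * g)
  refine toMvPowerSeries_injective (hunit.isRegular.left ?_)
  dsimp only
  rw [← map_mul, ← map_mul, hfg]

theorem isLeftRegular_mul_add_one_sub_mul_one_sub {E F : AddMonoidAlgebra R (σ →₀ ℕ)}
    (hF : IsIdempotentElem F) (hEF : constantCoeff E = constantCoeff F) :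
    IsLeftRegular (F * E + (1 - F) * (1 - E)) := by
  apply isLeftRegular_of_isUnit_constantCoeff
  rw [map_add, map_mul, map_mul, map_sub, map_sub, map_one, hEF,
    (hF.map constantCoeff).mul_add_one_sub_mul_one_sub_self]
  exact isUnit_one

theorem mul_mul_eq_zero_iff_of_constantCoeff_eq {e f : AddMonoidAlgebra R (σ →₀ ℕ)}
    (he : IsIdempotentElem e) (hf : IsIdempotentElem f) (hef : constantCoeff e = constantCoeff f)
    {p : AddMonoidAlgebra R (σ →₀ ℕ)} : (∀ q, e * q * p = 0) ↔ ∀ q, f * q * p = 0 :=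
  ⟨hf.mul_mul_eq_zero_of_isLeftRegular he (isLeftRegular_mul_add_one_sub_mul_one_sub he hef.symm),
    he.mul_mul_eq_zero_of_isLeftRegular hf (isLeftRegular_mul_add_one_sub_mul_one_sub hf hef)⟩

theorem _root_.IsRightCPBaer.addMonoidAlgebra (hR : IsRightCPBaer R) :
    IsRightCPBaer (AddMonoidAlgebra R (σ →₀ ℕ)) := by
  intro e he
  obtain ⟨c, hc, hcR⟩ := hR (constantCoeff e) (IsIdempotentElem.map he constantCoeff)
  refine ⟨single 0 c, IsIdempotentElem.map hc singleZeroRingHom, fun p => ?_⟩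
  have he₀ : IsIdempotentElem (single (0 : σ →₀ ℕ) (constantCoeff e)) :=
    IsIdempotentElem.map he (singleZeroRingHom.comp constantCoeff)
  rw [mul_mul_eq_zero_iff_of_constantCoeff_eq he he₀ (constantCoeff_single_zero _).symm,
    single_zero_mul_mul_eq_zero_iff, exists_eq_single_zero_mul_iff hc, forall_comm]
  exact forall_congr' fun g => hcR (p.coeff g)

theorem _root_.IsRightCPBaer.of_addMonoidAlgebra
    (hS : IsRightCPBaer (AddMonoidAlgebra R (σ →₀ ℕ))) : IsRightCPBaer R := by
  intro e he
  obtain ⟨C, hC, hCS⟩ := hS (single 0 e) (IsIdempotentElem.map he singleZeroRingHom)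
  refine ⟨constantCoeff C, IsIdempotentElem.map hC constantCoeff,
    fun a => ⟨fun ha => ?_, ?_⟩⟩
  · have hA : ∀ q, single (0 : σ →₀ ℕ) e * q * single 0 a = 0 :=
      single_zero_mul_mul_eq_zero_iff.mpr fun r g => by
        classical
        rw [coeff_single, Finsupp.single_apply]
        split_ifs
        exacts [ha r, mul_zero _]
    obtain ⟨q, hq⟩ := (hCS (single 0 a)).mp hA
    exact ⟨constantCoeff q, by rw [← map_mul, ← hq, constantCoeff_single_zero]⟩
  · rintro ⟨r, rfl⟩ s
    have hCe := congrArg constantCoeff ((hCS C).mpr ⟨C, hC.symm⟩ (single 0 s))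
    rw [map_mul, map_mul, constantCoeff_single_zero, constantCoeff_single_zero, map_zero] at hCe
    rw [← mul_assoc, hCe, zero_mul]

end AddMonoidAlgebra

theorem isRightCPBaer_iff_mvPolynomial_general {R : Type*} [Ring R] (X : Type*) :
    IsRightCPBaer R ↔ IsRightCPBaer (AddMonoidAlgebra R (X →₀ ℕ)) :=
  ⟨IsRightCPBaer.addMonoidAlgebra, IsRightCPBaer.of_addMonoidAlgebra⟩

/-- For a nonempty set `X` of commuting indeterminates, `R` is right 𝔠𝔓-Baer iff the
polynomial ring `R[X]` (realized as the monoid algebra of `X →₀ ℕ` over `R`) is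
right 𝔠𝔓-Baer. -/
theorem isRightCPBaer_iff_mvPolynomial {R : Type*} [Ring R] (X : Type*) [Nonempty X] :
    IsRightCPBaer R ↔ IsRightCPBaer (AddMonoidAlgebra R (X →₀ ℕ)) :=
  isRightCPBaer_iff_mvPolynomial_general X
end

section
/- Let G be a positive linearly ordered cancellative monoid with identity \mu and R a ring. If e = e_0 g_0 + e_1 g_1 + ... + e_m g_m is an idempotent of the monoid ring R[G] with g_0 < g_1 < ... < g_m, then g_0 = \mu and e_0 is an idempotent of R. -/
/-!
Let `a` be the least element of the support of the idempotent `e`. If `1 < a`, every product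
`b * b'` of support elements satisfies `b < b * b'` with `a ≤ b`, so it exceeds `a`; hence `a` is
not in the support of `e * e = e`, a contradiction. So `a = 1`, and since `1` factors in a positive
monoid only as `1 * 1`, the coefficient of `1` in `e * e` is `e₀ * e₀`.
-/

open MonoidAlgebra

section PositiveMonoid

variable {R G : Type*} [Semiring R] [Monoid G] [LinearOrder G] [MulLeftStrictMono G]

theorem eq_one_and_eq_one_of_mul_eq_one (hpos : ∀ s : G, 1 ≤ s) {a b : G} (h : a * b = 1) :
    a = 1 ∧ b = 1 := by
  have hb : b = 1 := by
    by_contra hb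
    have : a < a * b := lt_mul_of_one_lt_right' a ((hpos b).lt_of_ne' hb)
    exact (h ▸ this).not_ge (hpos a)
  exact ⟨by simpa [hb] using h, hb⟩

theorem MonoidAlgebra.coeff_mul_one_of_one_le (hpos : ∀ s : G, 1 ≤ s) (f g : R[G]) :
    (f * g).coeff 1 = f.coeff 1 * g.coeff 1 := by
  rw [← coeff_mul_mul_of_uniqueMul, one_mul]
  intro a b _ _ hab
  exact eq_one_and_eq_one_of_mul_eq_one hpos (hab.trans (one_mul 1))

theorem MonoidAlgebra.coeff_mul_eq_zero_of_one_lt {a : G} (ha : 1 < a) {f g : R[G]}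
    (hf : a ∈ lowerBounds (f.coeff.support : Set G))
    (hg : a ∈ lowerBounds (g.coeff.support : Set G)) : (f * g).coeff a = 0 := by
  classical
  refine Finsupp.notMem_support_iff.mp fun hmem => ?_
  obtain ⟨b, hb, b', hb', rfl⟩ := Finset.mem_mul.mp (support_coeff_mul_subset f g hmem)
  have hbb' : b < b * b' := lt_mul_of_one_lt_right' b (ha.trans_le (hg hb'))
  exact (hbb'.trans_le (hf hb)).false

theorem MonoidAlgebra.eq_one_of_isLeast_support_of_isIdempotentElem (hpos : ∀ s : G, 1 ≤ s)
    {e : R[G]} (he : IsIdempotentElem e) {a : G} (ha : IsLeast (e.coeff.support : Set G) a) :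
    a = 1 := by
  by_contra ha1
  have hcoeff : (e * e).coeff a = 0 :=
    coeff_mul_eq_zero_of_one_lt ((hpos a).lt_of_ne' ha1) ha.2 ha.2
  rw [he.eq] at hcoeff
  exact Finsupp.mem_support_iff.mp ha.1 hcoeff

end PositiveMonoid

theorem monoidAlgebra_idempotent_constant_term_general
    {R : Type*} [Ring R] {G : Type*} [Monoid G] [LinearOrder G]
    [CovariantClass G G (· * ·) (· < ·)]
    (hpos : ∀ s : G, 1 ≤ s)
    (m : ℕ) (g : Fin (m + 1) → G) (hg : StrictMono g)
    (c : Fin (m + 1) → R) (hc : ∀ i, c i ≠ 0)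
    (e : MonoidAlgebra R G)
    (hrep : e = ∑ i, MonoidAlgebra.single (g i) (c i))
    (he : e * e = e) :
    g 0 = 1 ∧ c 0 * c 0 = c 0 := by
  classical
  have hcoeff : ∀ i, e.coeff (g i) = c i := fun i => by
    simp [hrep, coeff_sum, Finsupp.single_apply, hg.injective.eq_iff]
  have hsupp : e.coeff.support ⊆ Finset.univ.image g := by
    rw [hrep, coeff_sum]
    refine (Finsupp.support_finsetSum).trans (Finset.biUnion_subset.mpr fun i _ => ?_)
    exact (Finsupp.support_single_subset).trans (by simp)
  have hleast : IsLeast (e.coeff.support : Set G) (g 0) := by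
    refine ⟨Finsupp.mem_support_iff.mpr ((hcoeff 0).trans_ne (hc 0)), fun b hb => ?_⟩
    obtain ⟨i, -, rfl⟩ := Finset.mem_image.mp (hsupp hb)
    exact hg.monotone (Fin.zero_le i)
  have hg0 : g 0 = 1 := eq_one_of_isLeast_support_of_isIdempotentElem hpos he hleast
  refine ⟨hg0, ?_⟩
  have h1 := coeff_mul_one_of_one_le hpos e e
  rw [he, ← hg0, hcoeff] at h1
  exact h1.symm

/-- Let `G` be a positive linearly ordered cancellative monoid and `R` a ring. If
`e = e₀g₀ + e₁g₁ + ⋯ + eₘgₘ` is an idempotent of the monoid ring `R[G]` with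
`g₀ < g₁ < ⋯ < gₘ` (and nonzero coefficients), then `g₀ = 1` and `e₀` is an
idempotent of `R`. -/
theorem monoidAlgebra_idempotent_constant_term
    {R : Type*} [Ring R] {G : Type*} [Monoid G] [LinearOrder G]
    [CovariantClass G G (· * ·) (· < ·)]
    [CovariantClass G G (Function.swap (· * ·)) (· < ·)]
    [IsCancelMul G]
    (hpos : ∀ s : G, 1 ≤ s)
    (m : ℕ) (g : Fin (m + 1) → G) (hg : StrictMono g)
    (c : Fin (m + 1) → R) (hc : ∀ i, c i ≠ 0)
    (e : MonoidAlgebra R G)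
    (hrep : e = ∑ i, MonoidAlgebra.single (g i) (c i))
    (he : e * e = e) :
    g 0 = 1 ∧ c 0 * c 0 = c 0 :=
  monoidAlgebra_idempotent_constant_term_general hpos m g hg c hc e hrep he
end

section
/- Let G be a positive linearly ordered cancellative monoid with identity \mu and R a ring. If e = e_0 g_0 + ... + e_m g_m is an idempotent of the monoid ring R[G] with g_0 < ... < g_m, then every coefficient e_i lies in the two-sided ideal R e_0 R, where e_0 is the coefficient at the identity \mu. -/
/-!
Write `e = e * e` and read off the coefficient at `x`: it is a sum of products `e a * e b` with
`a * b = x`. A term with `b = 1` is a multiple of `e 1`; otherwise `b > 1`, so `a < x`.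
Induction along the (finite) support therefore puts every coefficient of an idempotent in any
two-sided ideal containing `e 1`. For the given representation, `e 1 ≠ 0` (otherwise `e = 0`),
so the least exponent `g 0` is `1` and `e 1 = c 0`.
-/

namespace MonoidAlgebra

theorem coeff_sum_single {R G ι : Type*} [Semiring R] [DecidableEq G] (s : Finset ι) (g : ι → G) (c : ι → R)
    (x : G) : (∑ i ∈ s, single (g i) (c i)).coeff x = ∑ i ∈ s, if g i = x then c i else 0 := by
  simp only [coeff_sum, coeff_single, Finsupp.finsetSum_apply, Finsupp.single_apply]

variable {R G : Type*} [Ring R] [Monoid G] [LinearOrder G] [MulLeftStrictMono G]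

theorem coeff_mul_mem_of_forall_lt (hpos : ∀ s : G, 1 ≤ s) {I : TwoSidedIdeal R}
    {x : G} {f g : MonoidAlgebra R G} (hg : g.coeff 1 ∈ I)
    (hlt : ∀ a < x, f.coeff a ∈ I) : (f * g).coeff x ∈ I := by
  classical
  rw [coeff_mul]
  refine sum_mem fun a _ => sum_mem fun b _ => ?_
  dsimp only
  split_ifs with hab
  · rcases eq_or_ne b 1 with rfl | hb
    · exact I.mul_mem_left _ _ hg
    refine I.mul_mem_right _ _ (hlt a ?_)
    calc a < a * b := lt_mul_of_one_lt_right' a ((hpos b).lt_of_ne hb.symm)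
      _ = x := hab
  · exact zero_mem I

theorem coeff_mem_of_isIdempotentElem (hpos : ∀ s : G, 1 ≤ s) {I : TwoSidedIdeal R}
    {e : MonoidAlgebra R G} (he : IsIdempotentElem e) (h1 : e.coeff 1 ∈ I) (x : G) :
    e.coeff x ∈ I := by
  by_cases hx : x ∈ e.coeff.support
  · refine (e.coeff.support.finite_toSet.wellFoundedOn (r := (· < ·))).induction hx
      (P := fun y => e.coeff y ∈ I) fun y _ ih => ?_
    rw [← he]
    refine coeff_mul_mem_of_forall_lt hpos h1 fun a ha => ?_
    by_cases ha' : a ∈ e.coeff.support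
    · exact ih a ha' ha
    · rw [Finsupp.notMem_support_iff.mp ha']
      exact zero_mem I
  · rw [Finsupp.notMem_support_iff.mp hx]
    exact zero_mem I

end MonoidAlgebra

open MonoidAlgebra in
theorem monoidAlgebra_idempotent_coeff_mem_span_general
    {R : Type*} [Ring R] {G : Type*} [Monoid G] [LinearOrder G]
    [CovariantClass G G (· * ·) (· < ·)]
    (hpos : ∀ s : G, 1 ≤ s)
    (m : ℕ) (g : Fin (m + 1) → G) (hg : StrictMono g)
    (c : Fin (m + 1) → R) (hc : ∀ i, c i ≠ 0)
    (e : MonoidAlgebra R G)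
    (hrep : e = ∑ i, MonoidAlgebra.single (g i) (c i))
    (he : e * e = e) :
    ∀ i, c i ∈ TwoSidedIdeal.span {c 0} := by
  have hcoeff (i) : e.coeff (g i) = c i := by
    rw [hrep, coeff_sum_single]
    simp [hg.injective.eq_iff]
  have hmem (x) : e.coeff x ∈ TwoSidedIdeal.span {e.coeff 1} :=
    coeff_mem_of_isIdempotentElem hpos he (TwoSidedIdeal.subset_span (Set.mem_singleton _)) x
  have hone : e.coeff 1 ≠ 0 := fun h0 => hc 0 <| by
    simpa [hcoeff] using coeff_mem_of_isIdempotentElem hpos he (I := ⊥) (by simpa using h0) (g 0)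
  obtain ⟨j, hj⟩ : ∃ j, g j = 1 := by
    by_contra! hne
    exact hone (by simp [hrep, hne])
  have hg0 : g 0 = 1 := le_antisymm (hj ▸ hg.monotone (Fin.zero_le j)) (hpos _)
  intro i
  simpa [← hg0, hcoeff] using hmem (g i)

/-- Let `G` be a positive linearly ordered cancellative monoid and `R` a ring. If
`e = e₀g₀ + ⋯ + eₘgₘ` is an idempotent of the monoid ring `R[G]` with `g₀ < ⋯ < gₘ`
(and nonzero coefficients), then every coefficient `eᵢ` lies in the two-sided ideal
`R e₀ R`, where `e₀` is the coefficient at the identity. -/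
theorem monoidAlgebra_idempotent_coeff_mem_span
    {R : Type*} [Ring R] {G : Type*} [Monoid G] [LinearOrder G]
    [CovariantClass G G (· * ·) (· < ·)]
    [CovariantClass G G (Function.swap (· * ·)) (· < ·)]
    [IsCancelMul G]
    (hpos : ∀ s : G, 1 ≤ s)
    (m : ℕ) (g : Fin (m + 1) → G) (hg : StrictMono g)
    (c : Fin (m + 1) → R) (hc : ∀ i, c i ≠ 0)
    (e : MonoidAlgebra R G)
    (hrep : e = ∑ i, MonoidAlgebra.single (g i) (c i))
    (he : e * e = e) :
    ∀ i, c i ∈ TwoSidedIdeal.span {c 0} :=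
  monoidAlgebra_idempotent_coeff_mem_span_general hpos m g hg c hc e hrep he
end

section
/- Let G be a positive linearly ordered cancellative monoid and R a ring. Then R is right cP-Baer if and only if the monoid ring R[G] is right cP-Baer. -/
/-!
Since `1` is the least element of `G`, the coefficient of `x * y` at a lower bound `g₀` of the
support of `y` is `x(1) * y(g₀)`; in particular `x ↦ x(1)` is multiplicative. For an idempotent
`E` of `R[G]` this identifies `r(E·R[G])` with the elements all of whose coefficients lie in
`r(E(1)·R)`: if `x ∈ r(E(1)·R)`, the least coefficient of `D = E f (single 1 x) = E D` is
`E(1) D(g₀) = 0`, so `D = 0`. So a `c` for `E(1)` gives the idempotent `single 1 c` for `E`,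
and a `C` for `single 1 e` gives `C(1)` for `e`.
-/

open scoped MonoidAlgebra

namespace MonoidAlgebra

theorem exists_eq_single_one_mul_iff {R M : Type*} [Semiring R] [Monoid M] {c : R}
    (hc : c * c = c) (a : R[M]) :
    (∃ f, a = single 1 c * f) ↔ ∀ m, ∃ r, a.coeff m = c * r := by
  constructor
  · rintro ⟨f, rfl⟩ m
    exact ⟨f.coeff m, coeff_single_one_mul f c m⟩
  · intro h
    refine ⟨a, ?_⟩
    ext m
    obtain ⟨r, hr⟩ := h m
    rw [coeff_single_one_mul, hr, ← mul_assoc, hc]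

section LinearOrder

variable {R G : Type*} [Monoid G] [LinearOrder G]

theorem eq_zero_of_forall_mem_lowerBounds_coeff_eq_zero [Semiring R] {x : R[G]}
    (h : ∀ g₀ ∈ lowerBounds (x.coeff.support : Set G), x.coeff g₀ = 0) : x = 0 := by
  by_contra hx
  have hne : x.coeff.support.Nonempty := by simpa [Finsupp.support_nonempty_iff] using hx
  exact Finsupp.mem_support_iff.mp (x.coeff.support.min'_mem hne)
    (h _ fun g hg => x.coeff.support.min'_le g hg)

variable [MulRightStrictMono G]

theorem coeff_mul_of_mem_lowerBounds [Semiring R] (hpos : ∀ g : G, 1 ≤ g) (x : R[G])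
    {y : R[G]} {g₀ : G} (hg₀ : g₀ ∈ lowerBounds (y.coeff.support : Set G)) :
    (x * y).coeff g₀ = x.coeff 1 * y.coeff g₀ := by
  classical
  rw [coeff_mul, Finsupp.sum_eq_single 1]
  · simp +contextual [Finsupp.sum_ite_eq']
  · intro h _ h1
    refine Finset.sum_eq_zero fun k hk => if_neg ?_
    exact ((hg₀ hk).trans_lt (lt_mul_of_one_lt_left' k ((hpos h).lt_of_ne' h1))).ne'
  · simp

theorem coeff_mul_one [Semiring R] (hpos : ∀ g : G, 1 ≤ g) (x y : R[G]) :
    (x * y).coeff 1 = x.coeff 1 * y.coeff 1 :=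
  coeff_mul_of_mem_lowerBounds hpos x fun g _ => hpos g

theorem mul_mul_single_one_eq_zero [Semiring R] (hpos : ∀ g : G, 1 ≤ g) {E : R[G]}
    (hE : E * E = E) {x : R} (hx : ∀ r, E.coeff 1 * r * x = 0) (f : R[G]) :
    E * f * single 1 x = 0 := by
  refine eq_zero_of_forall_mem_lowerBounds_coeff_eq_zero fun g₀ hg₀ => ?_
  calc (E * f * single 1 x).coeff g₀
      = (E * (E * f * single 1 x)).coeff g₀ := by rw [← mul_assoc, ← mul_assoc, hE]
    _ = E.coeff 1 * ((E * f).coeff g₀ * x) := by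
      rw [coeff_mul_of_mem_lowerBounds hpos E hg₀, coeff_mul_single_one]
    _ = 0 := by rw [← mul_assoc, hx]

theorem mul_mul_eq_zero_of_forall_coeff [Semiring R] (hpos : ∀ g : G, 1 ≤ g) {E : R[G]}
    (hE : E * E = E) {b : R[G]} (hb : ∀ g r, E.coeff 1 * r * b.coeff g = 0) (f : R[G]) :
    E * f * b = 0 := by
  rw [← sum_coeff_single b, Finsupp.sum, Finset.mul_sum]
  refine Finset.sum_eq_zero fun g _ => ?_
  have hsplit : single g (b.coeff g) = single 1 (b.coeff g) * single g 1 := by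
    rw [single_mul_single, one_mul, mul_one]
  rw [hsplit, ← mul_assoc, mul_mul_single_one_eq_zero hpos hE (hb g) f, zero_mul]

theorem forall_mul_mul_eq_zero_iff [Ring R] (hpos : ∀ g : G, 1 ≤ g) {E : R[G]}
    (hE : E * E = E) (b : R[G]) :
    (∀ f, E * f * b = 0) ↔ ∀ g r, E.coeff 1 * r * b.coeff g = 0 := by
  classical
  refine ⟨fun hb => ?_, mul_mul_eq_zero_of_forall_coeff hpos hE⟩
  set p : G → Prop := fun g => ∀ r, E.coeff 1 * r * b.coeff g = 0
  -- `bad` keeps the coefficients of `b` outside `r(E(1)·R)`; its least one would lie inside.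
  set bad : R[G] := b - ofCoeff (b.coeff.filter p)
  have hbad_coeff (g : G) : bad.coeff g = if p g then 0 else b.coeff g := by
    simp only [bad, coeff_sub, Finsupp.coe_sub, Pi.sub_apply, Finsupp.filter_apply]
    split_ifs <;> simp
  have hbad (f : R[G]) : E * f * bad = 0 := by
    have hgood : ∀ g r, E.coeff 1 * r * (ofCoeff (b.coeff.filter p)).coeff g = 0 := by
      intro g r
      rw [coeff_ofCoeff, Finsupp.filter_apply]
      split_ifs with hg
      exacts [hg r, mul_zero _]
    rw [mul_sub, hb, mul_mul_eq_zero_of_forall_coeff hpos hE hgood, sub_zero]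
  have hbad_zero : bad = 0 := eq_zero_of_forall_mem_lowerBounds_coeff_eq_zero fun g₀ hg₀ => by
    by_contra hne
    have hp : ¬ p g₀ := fun h => hne (by rw [hbad_coeff, if_pos h])
    refine hp fun r => ?_
    have := congr_arg (coeff · g₀) (hbad (single 1 r))
    simp only [coeff_mul_of_mem_lowerBounds hpos _ hg₀, coeff_mul_single_one, hbad_coeff,
      if_neg hp] at this
    simpa using this
  intro g r
  by_cases hg : p g
  · exact hg r
  · have hzero : b.coeff g = 0 := by simpa [hbad_zero, hg] using (hbad_coeff g).symm
    rw [hzero, mul_zero]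

theorem forall_mul_mul_single_one_eq_zero_iff [Ring R] (hpos : ∀ g : G, 1 ≤ g) {e : R}
    (he : e * e = e) (x : R) :
    (∀ f : R[G], single 1 e * f * single 1 x = 0) ↔ ∀ r, e * r * x = 0 := by
  have hE : single (1 : G) e * single 1 e = single 1 e := by rw [single_mul_single, one_mul, he]
  rw [forall_mul_mul_eq_zero_iff hpos hE]
  simp only [coeff_single, Finsupp.single_eq_same, Finsupp.single_apply, mul_ite, mul_zero,
    ite_eq_right_iff]
  exact ⟨fun h r => h 1 r rfl, fun h _ r _ => h r⟩

end LinearOrder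

end MonoidAlgebra

open MonoidAlgebra

theorem isRightCPBaer_iff_monoidAlgebra_general
    {R : Type*} [Ring R] {G : Type*} [Monoid G] [LinearOrder G]
    [CovariantClass G G (Function.swap (· * ·)) (· < ·)]
    (hpos : ∀ s : G, 1 ≤ s) :
    IsRightCPBaer R ↔ IsRightCPBaer (MonoidAlgebra R G) := by
  constructor
  · intro hR E hE
    have he : E.coeff 1 * E.coeff 1 = E.coeff 1 := by rw [← coeff_mul_one hpos, hE]
    obtain ⟨c, hc, hcR⟩ := hR _ he
    refine ⟨single 1 c, by rw [single_mul_single, one_mul, hc], fun a => ?_⟩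
    rw [forall_mul_mul_eq_zero_iff hpos hE, exists_eq_single_one_mul_iff hc]
    exact forall_congr' fun g => hcR (a.coeff g)
  · intro hS e he
    have hE : single (1 : G) e * single 1 e = single 1 e := by
      rw [single_mul_single, one_mul, he]
    obtain ⟨C, hC, hCS⟩ := hS _ hE
    refine ⟨C.coeff 1, by rw [← coeff_mul_one hpos, hC], fun a => ⟨fun ha => ?_, ?_⟩⟩
    · obtain ⟨f, hf⟩ := (hCS _).1 ((forall_mul_mul_single_one_eq_zero_iff hpos he a).2 ha)
      exact ⟨f.coeff 1, by simpa [coeff_mul_one hpos] using congr_arg (coeff · 1) hf⟩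
    · rintro ⟨r, rfl⟩ s
      have hC1 : e * s * C.coeff 1 = 0 := by
        simpa using (forall_mul_mul_eq_zero_iff hpos hE C).1 ((hCS C).2 ⟨C, hC.symm⟩) 1 s
      rw [← mul_assoc, hC1, zero_mul]

/-- For a positive linearly ordered cancellative monoid `G`, a ring `R` is right
𝔠𝔓-Baer iff the monoid ring `R[G]` is right 𝔠𝔓-Baer. -/
theorem isRightCPBaer_iff_monoidAlgebra
    {R : Type*} [Ring R] {G : Type*} [Monoid G] [LinearOrder G]
    [CovariantClass G G (· * ·) (· < ·)]
    [CovariantClass G G (Function.swap (· * ·)) (· < ·)]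
    [IsCancelMul G]
    (hpos : ∀ s : G, 1 ≤ s) :
    IsRightCPBaer R ↔ IsRightCPBaer (MonoidAlgebra R G) :=
  isRightCPBaer_iff_monoidAlgebra_general hpos
end

section
/- Let R be a ring with an endomorphism \alpha such that for all a, b in R, a b = 0 implies a \alpha(b) = 0. Then \alpha(e) = e for every idempotent e of R. -/
/-- If `α` is a ring endomorphism of `R` such that `a*b = 0` implies `a*α(b) = 0`,
then `α(e) = e` for every idempotent `e` of `R`. -/
theorem endomorphism_fixes_idempotents
    {R : Type*} [Ring R] (α : R →+* R)
    (hcomp : ∀ a b : R, a * b = 0 → a * α b = 0) :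
    ∀ e : R, e * e = e → α e = e := by
  intro e he
  have h1 : e * (1 - e) = 0 := by rw [mul_sub, mul_one, he, sub_self]
  have h2 : (1 - e) * e = 0 := by rw [sub_mul, one_mul, he, sub_self]
  have h1' := hcomp e (1 - e) h1
  have h2' := hcomp (1 - e) e h2
  rw [map_sub, map_one, mul_sub, mul_one, sub_eq_zero] at h1'
  rw [sub_mul, one_mul, sub_eq_zero] at h2'
  rw [h2', ← h1']
end
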